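/- (Proposition 1.) Under the uplink model with h_J ≠ 0, suppose b̂ ∈ ℂ^B is a nonzero maximizer of b ↦ |h_Jᴴ b|² / ‖b‖² over nonzero b ∈ ℂ^B, â ∈ ℂ^B is a nonzero maximizer of a ↦ |h_Jᴴ a|² / (aᴴ C_y a) over nonzero a ∈ ℂ^B, and β̂ = E_J (h_Jᴴ â)(b̂ᴴ h_J) / ( ‖b̂‖² (âᴴ C_y â) ). Then (β̂, b̂, â) minimizes the mean squared error: for all β ∈ ℂ and all a, b ∈ ℂ^B, E[‖β̂ b̂ (âᴴ y) − h_J s_J‖²] ≤ E[‖β b (aᴴ y) − h_J s_J‖²]. -/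

import Mathlib

/-!
Put `u = aᴴ y`. Independence and the zero means kill every cross term, so `E|u|² = aᴴ C_y a` and
`E[u s_J*] = E_J (aᴴ h_J)`; hence the MSE is
`E_J ‖h_J‖² + |β|² ‖b‖² (aᴴ C_y a) - 2 E_J Re (β (h_Jᴴ b) (aᴴ h_J))`.
Completing the square in `β` bounds this below by `E_J ‖h_J‖² - E_J² ρ_a(a) ρ_b(b)`, where
`ρ_b(b) = |h_Jᴴ b|² / ‖b‖²` and `ρ_a(a) = |h_Jᴴ a|² / (aᴴ C_y a)`, with equality at
`β = conj (E_J (h_Jᴴ b) (aᴴ h_J)) / (‖b‖² aᴴ C_y a)`. The bound is smallest when both quotients are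
maximal, at `(â, b̂)`, and there the optimal `β` is `β̂`.
-/

open MeasureTheory ProbabilityTheory Matrix
open scoped ComplexOrder

/-- Squared Euclidean norm of a complex vector. -/
noncomputable def vecNormSq {m : Type*} [Fintype m] (v : m → ℂ) : ℝ := ∑ i, ‖v i‖ ^ 2

open ComplexConjugate

section VecNormSq

variable {m : Type*} [Fintype m]

lemma vecNormSq_nonneg (v : m → ℂ) : 0 ≤ vecNormSq v :=
  Finset.sum_nonneg fun _ _ => by positivity

lemma vecNormSq_pos {v : m → ℂ} (hv : v ≠ 0) : 0 < vecNormSq v := by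
  obtain ⟨i, hi⟩ := Function.ne_iff.mp hv
  exact Finset.sum_pos' (fun _ _ => by positivity)
    ⟨i, Finset.mem_univ i, pow_pos (norm_pos_iff.mpr hi) 2⟩

lemma vecNormSq_eq_zero {v : m → ℂ} : vecNormSq v = 0 ↔ v = 0 :=
  ⟨fun h => by_contra fun hv => (vecNormSq_pos hv).ne' h, fun h => by simp [h, vecNormSq]⟩

lemma vecNormSq_star (v : m → ℂ) : vecNormSq (star v) = vecNormSq v := by
  simp [vecNormSq]

lemma star_dotProduct_self (v : m → ℂ) : star v ⬝ᵥ v = vecNormSq v := by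
  simp [vecNormSq, dotProduct, mul_comm, RCLike.mul_conj]

lemma vecNormSq_smul_sub_smul (d e : ℂ) (b h : m → ℂ) :
    vecNormSq (d • b - e • h) =
      ‖d‖ ^ 2 * vecNormSq b + ‖e‖ ^ 2 * vecNormSq h - 2 * (d * conj e * (star h ⬝ᵥ b)).re := by
  simp only [vecNormSq, dotProduct, Pi.sub_apply, Pi.smul_apply, smul_eq_mul, Complex.sq_norm,
    Complex.normSq_sub, Finset.mul_sum, Finset.sum_sub_distrib,
    Finset.sum_add_distrib, Complex.re_sum, map_mul, Pi.star_apply, Complex.star_def]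
  congr 1
  refine Finset.sum_congr rfl fun i _ => ?_
  ring_nf

end VecNormSq

section Covariance

variable {m k : Type*} [Fintype m] [Fintype k]

lemma star_dotProduct_mul_conjTranspose_mulVec (H : Matrix m k ℂ) (a : m → ℂ) :
    star a ⬝ᵥ (H * Hᴴ) *ᵥ a = vecNormSq (star a ᵥ* H) := by
  rw [← mulVec_mulVec, dotProduct_mulVec, ← star_dotProduct_self, star_vecMul, star_star]
  exact dotProduct_comm _ _

lemma star_dotProduct_vecMulVec_mulVec (h a : m → ℂ) :
    star a ⬝ᵥ vecMulVec h (star h) *ᵥ a = (‖star a ⬝ᵥ h‖ ^ 2 : ℝ) := by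
  rw [vecMulVec_mulVec, op_smul_eq_smul, dotProduct_smul, smul_eq_mul, star_dotProduct h, mul_comm]
  exact_mod_cast RCLike.mul_conj (star a ⬝ᵥ h)

lemma star_dotProduct_received (H : Matrix m k ℂ) (hJ a n : m → ℂ) (s : k → ℂ) (sJ : ℂ) :
    star a ⬝ᵥ (H *ᵥ s + sJ • hJ + n) = (star a ᵥ* H) ⬝ᵥ s + (star a ⬝ᵥ hJ) * sJ + star a ⬝ᵥ n := by
  rw [dotProduct_add, dotProduct_add, dotProduct_mulVec, dotProduct_smul, smul_eq_mul, mul_comm]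

variable [DecidableEq m]

noncomputable def uplinkCovariance (Es EJ N0 : ℝ) (H : Matrix m k ℂ) (h : m → ℂ) :
    Matrix m m ℂ :=
  (Es : ℂ) • (H * Hᴴ) + (EJ : ℂ) • vecMulVec h (star h) + (N0 : ℂ) • 1

lemma star_dotProduct_uplinkCovariance_mulVec (Es EJ N0 : ℝ) (H : Matrix m k ℂ) (h a : m → ℂ) :
    star a ⬝ᵥ uplinkCovariance Es EJ N0 H h *ᵥ a =
      (Es * vecNormSq (star a ᵥ* H) + EJ * ‖star a ⬝ᵥ h‖ ^ 2 + N0 * vecNormSq a : ℝ) := by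
  simp only [uplinkCovariance, add_mulVec, smul_mulVec, dotProduct_add, dotProduct_smul,
    one_mulVec, star_dotProduct_mul_conjTranspose_mulVec, star_dotProduct_vecMulVec_mulVec,
    star_dotProduct_self, smul_eq_mul]
  push_cast
  rfl

lemma re_star_dotProduct_uplinkCovariance_mulVec (Es EJ N0 : ℝ) (H : Matrix m k ℂ)
    (h a : m → ℂ) :
    (star a ⬝ᵥ uplinkCovariance Es EJ N0 H h *ᵥ a).re =
      Es * vecNormSq (star a ᵥ* H) + EJ * ‖star a ⬝ᵥ h‖ ^ 2 + N0 * vecNormSq a := by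
  rw [star_dotProduct_uplinkCovariance_mulVec, Complex.ofReal_re]

variable {Es EJ N0 : ℝ} (H : Matrix m k ℂ) (h : m → ℂ)

lemma mul_norm_sq_le_re_star_dotProduct_uplinkCovariance_mulVec (hEs : 0 ≤ Es) (hN0 : 0 ≤ N0)
    (a : m → ℂ) : EJ * ‖star a ⬝ᵥ h‖ ^ 2 ≤ (star a ⬝ᵥ uplinkCovariance Es EJ N0 H h *ᵥ a).re := by
  rw [re_star_dotProduct_uplinkCovariance_mulVec]
  nlinarith [mul_nonneg hEs (vecNormSq_nonneg (star a ᵥ* H)), mul_nonneg hN0 (vecNormSq_nonneg a)]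

lemma re_star_dotProduct_uplinkCovariance_mulVec_pos (hEs : 0 ≤ Es) (hEJ : 0 ≤ EJ)
    (hN0 : 0 < N0) {a : m → ℂ} (ha : a ≠ 0) :
    0 < (star a ⬝ᵥ uplinkCovariance Es EJ N0 H h *ᵥ a).re := by
  rw [re_star_dotProduct_uplinkCovariance_mulVec]
  nlinarith [mul_nonneg hEs (vecNormSq_nonneg (star a ᵥ* H)), mul_pos hN0 (vecNormSq_pos ha),
    mul_nonneg hEJ (sq_nonneg ‖star a ⬝ᵥ h‖)]

end Covariance

section SecondMoments

variable {Ω : Type*} [MeasurableSpace Ω] {μ : Measure Ω}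

lemma integral_mul_conj_self (f : Ω → ℂ) :
    ∫ ω, f ω * conj (f ω) ∂μ = (∫ ω, ‖f ω‖ ^ 2 ∂μ : ℝ) := by
  simp_rw [Complex.mul_conj', ← Complex.ofReal_pow]
  exact integral_complex_ofReal

lemma MeasureTheory.MemLp.integrable_norm_sq {f : Ω → ℂ} (hf : MemLp f 2 μ) :
    Integrable (fun ω => ‖f ω‖ ^ 2) μ :=
  (memLp_two_iff_integrable_sq_norm hf.aestronglyMeasurable).mp hf

lemma integrable_mul_conj {X Y : Ω → ℂ} (hX : MemLp X 2 μ) (hY : MemLp Y 2 μ) :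
    Integrable (fun ω => X ω * conj (Y ω)) μ :=
  hX.integrable_mul hY.star

lemma ProbabilityTheory.IndepFun.integral_mul_conj {X Y : Ω → ℂ} (h : IndepFun X Y μ)
    (hX : AEStronglyMeasurable X μ) (hY : AEStronglyMeasurable Y μ) :
    ∫ ω, X ω * conj (Y ω) ∂μ = (∫ ω, X ω ∂μ) * conj (∫ ω, Y ω ∂μ) := by
  rw [← integral_conj]
  exact (h.comp measurable_id Complex.continuous_conj.measurable).integral_fun_mul_eq_mul_integral
    hX (Complex.continuous_conj.comp_aestronglyMeasurable hY)

lemma integral_norm_add_sq_of_orthogonal {X Y : Ω → ℂ} (hX : MemLp X 2 μ) (hY : MemLp Y 2 μ)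
    (hXY : ∫ ω, X ω * conj (Y ω) ∂μ = 0) :
    ∫ ω, ‖X ω + Y ω‖ ^ 2 ∂μ = ∫ ω, ‖X ω‖ ^ 2 ∂μ + ∫ ω, ‖Y ω‖ ^ 2 ∂μ := by
  have hYX : ∫ ω, Y ω * conj (X ω) ∂μ = 0 := by
    rw [← map_eq_zero (starRingEnd ℂ), ← integral_conj, ← hXY]
    simp [mul_comm]
  apply Complex.ofReal_injective
  push_cast
  rw [← integral_mul_conj_self, ← integral_mul_conj_self, ← integral_mul_conj_self]
  have hexpand : ∀ ω, (X ω + Y ω) * conj (X ω + Y ω) =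
      X ω * conj (X ω) + Y ω * conj (Y ω) + (X ω * conj (Y ω) + Y ω * conj (X ω)) := by
    intro ω; simp only [map_add]; ring
  simp_rw [hexpand]
  have hXX := integrable_mul_conj hX hX
  have hYY := integrable_mul_conj hY hY
  have hXY' := integrable_mul_conj hX hY
  have hYX' := integrable_mul_conj hY hX
  rw [integral_add, integral_add hXX hYY, integral_add hXY' hYX',
    hXY, hYX, add_zero, add_zero]
  exacts [hXX.add hYY, hXY'.add hYX']

end SecondMoments

section RandomVectors

lemma measurable_dotProduct_const {ι : Type*} [Fintype ι] (v : ι → ℂ) :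
    Measurable fun x : ι → ℂ => v ⬝ᵥ x :=
  (continuous_const.dotProduct continuous_id).measurable

variable {Ω : Type*} [MeasurableSpace Ω] {μ : Measure Ω} {ι : Type*} [Fintype ι]
  {X : Ω → ι → ℂ}

lemma memLp_dotProduct (hX : MemLp X 2 μ) (v : ι → ℂ) : MemLp (fun ω => v ⬝ᵥ X ω) 2 μ := by
  simpa only [dotProduct] using memLp_finsetSum _ fun i _ => (hX.eval i).const_mul (v i)

lemma integral_dotProduct_eq_zero [IsFiniteMeasure μ] (hX : MemLp X 2 μ)
    (hmean : ∀ i, ∫ ω, X ω i ∂μ = 0) (v : ι → ℂ) : ∫ ω, v ⬝ᵥ X ω ∂μ = 0 := by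
  simp only [dotProduct]
  rw [integral_finsetSum _ fun i _ => ((hX.eval i).integrable one_le_two).const_mul (v i)]
  simp [integral_const_mul, hmean]

lemma integral_dotProduct_mul_conj_dotProduct (hX : MemLp X 2 μ) {C : Matrix ι ι ℂ}
    (hC : ∀ i j, ∫ ω, X ω i * conj (X ω j) ∂μ = C i j) (v w : ι → ℂ) :
    ∫ ω, (v ⬝ᵥ X ω) * conj (w ⬝ᵥ X ω) ∂μ = v ⬝ᵥ C *ᵥ star w := by
  have hexpand : ∀ ω, (v ⬝ᵥ X ω) * conj (w ⬝ᵥ X ω) =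
      ∑ i, ∑ j, v i * conj (w j) * (X ω i * conj (X ω j)) := by
    intro ω
    simp only [dotProduct, map_sum, map_mul, Finset.sum_mul_sum]
    exact Finset.sum_congr rfl fun i _ => Finset.sum_congr rfl fun j _ => by ring
  have hint : ∀ i j, Integrable (fun ω => v i * conj (w j) * (X ω i * conj (X ω j))) μ :=
    fun i j => (integrable_mul_conj (hX.eval i) (hX.eval j)).const_mul _
  simp_rw [hexpand]
  rw [integral_finsetSum _ fun i _ => integrable_finsetSum _ fun j _ => hint i j]
  simp_rw [integral_finsetSum _ fun j _ => hint _ j, integral_const_mul, hC]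
  simp only [dotProduct, mulVec, Finset.mul_sum, Pi.star_apply, Complex.star_def]
  exact Finset.sum_congr rfl fun i _ => Finset.sum_congr rfl fun j _ => by ring

lemma integral_norm_dotProduct_sq_of_white [DecidableEq ι] (hX : MemLp X 2 μ) {E0 : ℝ}
    (hcov : ∀ i j, ∫ ω, X ω i * conj (X ω j) ∂μ = if i = j then (E0 : ℂ) else 0)
    (v : ι → ℂ) : ∫ ω, ‖v ⬝ᵥ X ω‖ ^ 2 ∂μ = E0 * vecNormSq v := by
  apply Complex.ofReal_injective
  rw [← integral_mul_conj_self,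
    integral_dotProduct_mul_conj_dotProduct hX (C := (E0 : ℂ) • 1) fun i j => by
      simp [hcov, one_apply],
    smul_mulVec, one_mulVec, dotProduct_smul, dotProduct_comm, star_dotProduct_self]
  push_cast
  rfl

end RandomVectors

section ScalarMoments

variable {Ω : Type*} [MeasurableSpace Ω] {μ : Measure Ω}

lemma integral_norm_add_mul_add_sq_of_indepFun {X W Z : Ω → ℂ} (c : ℂ)
    (hX : MemLp X 2 μ) (hW : MemLp W 2 μ) (hZ : MemLp Z 2 μ)
    (hXW : IndepFun X W μ) (hXZ : IndepFun X Z μ) (hWZ : IndepFun W Z μ)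
    (hX0 : ∫ ω, X ω ∂μ = 0) (hZ0 : ∫ ω, Z ω ∂μ = 0) :
    ∫ ω, ‖X ω + c * W ω + Z ω‖ ^ 2 ∂μ =
      ∫ ω, ‖X ω‖ ^ 2 ∂μ + ‖c‖ ^ 2 * ∫ ω, ‖W ω‖ ^ 2 ∂μ + ∫ ω, ‖Z ω‖ ^ 2 ∂μ := by
  have hcW : MemLp (fun ω => c * W ω) 2 μ := hW.const_mul c
  have hXcW : ∫ ω, X ω * conj (c * W ω) ∂μ = 0 := by
    simp_rw [map_mul, mul_left_comm (X _)]
    rw [integral_const_mul, hXW.integral_mul_conj hX.1 hW.1, hX0, zero_mul, mul_zero]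
  have hXcWZ : ∫ ω, (X ω + c * W ω) * conj (Z ω) ∂μ = 0 := by
    simp_rw [add_mul, mul_assoc c]
    rw [integral_add (integrable_mul_conj hX hZ) ((integrable_mul_conj hW hZ).const_mul c),
      integral_const_mul, hXZ.integral_mul_conj hX.1 hZ.1, hWZ.integral_mul_conj hW.1 hZ.1, hZ0]
    simp
  rw [integral_norm_add_sq_of_orthogonal (X := fun ω => X ω + c * W ω) (hX.add hcW) hZ hXcWZ,
    integral_norm_add_sq_of_orthogonal hX hcW hXcW]
  simp_rw [norm_mul, mul_pow]
  rw [integral_const_mul]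

lemma integral_add_mul_add_mul_conj_of_indepFun {X W Z : Ω → ℂ} (c : ℂ)
    (hX : MemLp X 2 μ) (hW : MemLp W 2 μ) (hZ : MemLp Z 2 μ)
    (hXW : IndepFun X W μ) (hWZ : IndepFun W Z μ)
    (hX0 : ∫ ω, X ω ∂μ = 0) (hZ0 : ∫ ω, Z ω ∂μ = 0) :
    ∫ ω, (X ω + c * W ω + Z ω) * conj (W ω) ∂μ = c * ∫ ω, ‖W ω‖ ^ 2 ∂μ := by
  simp_rw [add_mul, mul_assoc c]
  rw [integral_add _ (integrable_mul_conj hZ hW),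
    integral_add (integrable_mul_conj hX hW) ((integrable_mul_conj hW hW).const_mul c),
    integral_const_mul, integral_mul_conj_self, hXW.integral_mul_conj hX.1 hW.1,
    hWZ.symm.integral_mul_conj hZ.1 hW.1, hX0, hZ0]
  · simp
  · exact (integrable_mul_conj hX hW).add ((integrable_mul_conj hW hW).const_mul c)

end ScalarMoments

section MeanSquaredError

variable {Ω : Type*} [MeasurableSpace Ω] {μ : Measure Ω} {m : Type*} [Fintype m]

lemma integral_vecNormSq_mul_smul_sub_smul {u w : Ω → ℂ}
    (hu : MemLp u 2 μ) (hw : MemLp w 2 μ) (β : ℂ) (b h : m → ℂ) :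
    ∫ ω, vecNormSq ((β * u ω) • b - w ω • h) ∂μ =
      ‖β‖ ^ 2 * vecNormSq b * ∫ ω, ‖u ω‖ ^ 2 ∂μ + vecNormSq h * ∫ ω, ‖w ω‖ ^ 2 ∂μ
        - 2 * (β * (star h ⬝ᵥ b) * ∫ ω, u ω * conj (w ω) ∂μ).re := by
  have hexpand : ∀ ω, vecNormSq ((β * u ω) • b - w ω • h) =
      ‖β‖ ^ 2 * vecNormSq b * ‖u ω‖ ^ 2 + vecNormSq h * ‖w ω‖ ^ 2
        - 2 * (β * (star h ⬝ᵥ b) * (u ω * conj (w ω))).re := by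
    intro ω
    rw [vecNormSq_smul_sub_smul, norm_mul, mul_pow]
    ring_nf
  have hcross : ∫ ω, (β * (star h ⬝ᵥ b) * (u ω * conj (w ω))).re ∂μ =
      (β * (star h ⬝ᵥ b) * ∫ ω, u ω * conj (w ω) ∂μ).re := by
    rw [← integral_const_mul]
    exact integral_re ((integrable_mul_conj hu hw).const_mul _)
  simp_rw [hexpand]
  rw [integral_sub, integral_add, integral_const_mul, integral_const_mul, integral_const_mul,
    hcross]
  · exact hu.integrable_norm_sq.const_mul _
  · exact hw.integrable_norm_sq.const_mul _
  · exact (hu.integrable_norm_sq.const_mul _).add (hw.integrable_norm_sq.const_mul _)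
  · exact ((integrable_mul_conj hu hw).const_mul _).re.const_mul 2

end MeanSquaredError

section CompletingTheSquare

lemma neg_norm_sq_div_le_norm_sq_mul_sub {c : ℝ} (hc : 0 ≤ c) {z : ℂ} (hz : c = 0 → z = 0)
    (β : ℂ) : -(‖z‖ ^ 2 / c) ≤ ‖β‖ ^ 2 * c - 2 * (β * z).re := by
  rcases hc.eq_or_lt with rfl | hc
  · simp [hz rfl]
  have hre : (β * z).re ≤ ‖β‖ * ‖z‖ := (Complex.re_le_norm _).trans_eq (norm_mul _ _)
  have hsq : 0 ≤ (‖β‖ * c - ‖z‖) ^ 2 / c := by positivity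
  have hexp : (‖β‖ * c - ‖z‖) ^ 2 / c = ‖β‖ ^ 2 * c - 2 * (‖β‖ * ‖z‖) + ‖z‖ ^ 2 / c := by
    field_simp
    ring
  linarith

lemma norm_sq_mul_sub_of_eq_conj_div {c : ℝ} (hc : 0 < c) (z : ℂ) :
    ‖conj z / c‖ ^ 2 * c - 2 * (conj z / c * z).re = -(‖z‖ ^ 2 / c) := by
  have hz : conj z / c * z = ((‖z‖ ^ 2 / c : ℝ) : ℂ) := by
    rw [div_mul_eq_mul_div, mul_comm, Complex.mul_conj']
    push_cast
    ring
  rw [hz, Complex.ofReal_re, norm_div, RCLike.norm_conj, Complex.norm_real,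
    Real.norm_of_nonneg hc.le]
  field_simp
  ring

end CompletingTheSquare

section MseExcess

variable {ι : Type*} [Fintype ι] {E : ℝ} {h : ι → ℂ} {Q : (ι → ℂ) → ℝ}

/-- `E[‖β b (aᴴ y) - h s_J‖²] - E ‖h‖²` when `E = E|s_J|²`, `Q a = E|aᴴ y|²` and
`E[(aᴴ y) s_J*] = E (aᴴ h)` (see `uplink_mse`). -/
noncomputable def mseExcess (E : ℝ) (h : ι → ℂ) (Q : (ι → ℂ) → ℝ) (β : ℂ) (a b : ι → ℂ) : ℝ :=
  ‖β‖ ^ 2 * (vecNormSq b * Q a) - 2 * (β * (E * (star h ⬝ᵥ b) * (star a ⬝ᵥ h))).re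

lemma norm_sq_mul_dotProduct_div (E : ℝ) (h a b : ι → ℂ) (k q : ℝ) :
    ‖(E : ℂ) * (star h ⬝ᵥ b) * (star a ⬝ᵥ h)‖ ^ 2 / (k * q) =
      E ^ 2 * (‖star h ⬝ᵥ a‖ ^ 2 / q * (‖star h ⬝ᵥ b‖ ^ 2 / k)) := by
  rw [star_dotProduct a, norm_mul, norm_mul, norm_star, Complex.norm_real, Real.norm_eq_abs,
    mul_pow, mul_pow, sq_abs]
  ring

lemma neg_le_mseExcess (hE : 0 < E) (hQ : ∀ a, E * ‖star a ⬝ᵥ h‖ ^ 2 ≤ Q a) (β : ℂ)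
    (a b : ι → ℂ) :
    -(E ^ 2 * (‖star h ⬝ᵥ a‖ ^ 2 / Q a * (‖star h ⬝ᵥ b‖ ^ 2 / vecNormSq b))) ≤
      mseExcess E h Q β a b := by
  have hQ0 : 0 ≤ Q a := (by positivity : 0 ≤ E * ‖star a ⬝ᵥ h‖ ^ 2).trans (hQ a)
  rw [← norm_sq_mul_dotProduct_div]
  refine neg_norm_sq_div_le_norm_sq_mul_sub (mul_nonneg (vecNormSq_nonneg b) hQ0)
    (fun hc => ?_) β
  rcases mul_eq_zero.mp hc with hb | ha
  · simp [vecNormSq_eq_zero.mp hb]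
  · have haJ : star a ⬝ᵥ h = 0 := by
      simpa using (show ‖star a ⬝ᵥ h‖ ^ 2 ≤ 0 by nlinarith [hQ a])
    simp [haJ]

lemma mseExcess_conj_div {a b : ι → ℂ} (hb : b ≠ 0) (ha : 0 < Q a) :
    mseExcess E h Q (conj (E * (star h ⬝ᵥ b) * (star a ⬝ᵥ h)) / (vecNormSq b * Q a : ℝ)) a b =
      -(E ^ 2 * (‖star h ⬝ᵥ a‖ ^ 2 / Q a * (‖star h ⬝ᵥ b‖ ^ 2 / vecNormSq b))) := by
  rw [mseExcess, norm_sq_mul_sub_of_eq_conj_div (mul_pos (vecNormSq_pos hb) ha),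
    norm_sq_mul_dotProduct_div]

lemma mseExcess_conj_div_le (hE : 0 < E) (hQ : ∀ a, E * ‖star a ⬝ᵥ h‖ ^ 2 ≤ Q a)
    {ahat bhat : ι → ℂ} (hbhat : bhat ≠ 0) (hahat : 0 < Q ahat)
    (hbmax : ∀ b : ι → ℂ, b ≠ 0 →
      ‖star h ⬝ᵥ b‖ ^ 2 / vecNormSq b ≤ ‖star h ⬝ᵥ bhat‖ ^ 2 / vecNormSq bhat)
    (hamax : ∀ a : ι → ℂ, a ≠ 0 → ‖star h ⬝ᵥ a‖ ^ 2 / Q a ≤ ‖star h ⬝ᵥ ahat‖ ^ 2 / Q ahat)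
    (β : ℂ) (a b : ι → ℂ) :
    mseExcess E h Q (conj (E * (star h ⬝ᵥ bhat) * (star ahat ⬝ᵥ h)) /
      (vecNormSq bhat * Q ahat : ℝ)) ahat bhat ≤ mseExcess E h Q β a b := by
  have ha : ‖star h ⬝ᵥ a‖ ^ 2 / Q a ≤ ‖star h ⬝ᵥ ahat‖ ^ 2 / Q ahat := by
    rcases eq_or_ne a 0 with rfl | ha
    · simpa using div_nonneg (sq_nonneg ‖star h ⬝ᵥ ahat‖) hahat.le
    · exact hamax a ha
  have hb : ‖star h ⬝ᵥ b‖ ^ 2 / vecNormSq b ≤ ‖star h ⬝ᵥ bhat‖ ^ 2 / vecNormSq bhat := by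
    rcases eq_or_ne b 0 with rfl | hb
    · simpa using div_nonneg (sq_nonneg ‖star h ⬝ᵥ bhat‖) (vecNormSq_nonneg bhat)
    · exact hbmax b hb
  rw [mseExcess_conj_div hbhat hahat]
  refine le_trans ?_ (neg_le_mseExcess hE hQ β a b)
  gcongr
  exact div_nonneg (sq_nonneg _) (vecNormSq_nonneg b)

end MseExcess

section UplinkModel

variable {Ω : Type*} [MeasurableSpace Ω] {μ : Measure Ω} [IsFiniteMeasure μ]
  {ι κ : Type*} [Fintype ι] [DecidableEq ι] [Fintype κ] [DecidableEq κ]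
  (H : Matrix ι κ ℂ) (hJ : ι → ℂ) {Es EJ N0 : ℝ} {s : Ω → κ → ℂ} {sJ : Ω → ℂ} {n : Ω → ι → ℂ}
  (hs_sJ : IndepFun s sJ μ) (hs_n : IndepFun s n μ) (hsJ_n : IndepFun sJ n μ)
  (hs2 : MemLp s 2 μ) (hsJ2 : MemLp sJ 2 μ) (hn2 : MemLp n 2 μ)
  (hsmean : ∀ i, ∫ ω, s ω i ∂μ = 0) (hnmean : ∀ i, ∫ ω, n ω i ∂μ = 0)
  (hscov : ∀ i j, ∫ ω, s ω i * conj (s ω j) ∂μ = if i = j then (Es : ℂ) else 0)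
  (hsJvar : ∫ ω, ‖sJ ω‖ ^ 2 ∂μ = EJ)
  (hncov : ∀ i j, ∫ ω, n ω i * conj (n ω j) ∂μ = if i = j then (N0 : ℂ) else 0)
include hs_sJ hs_n hsJ_n hs2 hsJ2 hn2 hsmean hnmean hscov hsJvar hncov

lemma uplink_received_moments (a : ι → ℂ) :
    ∫ ω, ‖star a ⬝ᵥ (H *ᵥ s ω + sJ ω • hJ + n ω)‖ ^ 2 ∂μ =
        Es * vecNormSq (star a ᵥ* H) + EJ * ‖star a ⬝ᵥ hJ‖ ^ 2 + N0 * vecNormSq a ∧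
      ∫ ω, (star a ⬝ᵥ (H *ᵥ s ω + sJ ω • hJ + n ω)) * conj (sJ ω) ∂μ =
        (star a ⬝ᵥ hJ) * EJ := by
  have hX := memLp_dotProduct hs2 (star a ᵥ* H)
  have hZ := memLp_dotProduct hn2 (star a)
  have hXW := hs_sJ.comp (measurable_dotProduct_const (star a ᵥ* H)) measurable_id
  have hXZ := hs_n.comp (measurable_dotProduct_const (star a ᵥ* H))
    (measurable_dotProduct_const (star a))
  have hWZ := hsJ_n.comp measurable_id (measurable_dotProduct_const (star a))
  have hX0 := integral_dotProduct_eq_zero hs2 hsmean (star a ᵥ* H)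
  have hZ0 := integral_dotProduct_eq_zero hn2 hnmean (star a)
  simp_rw [star_dotProduct_received]
  constructor
  · rw [integral_norm_add_mul_add_sq_of_indepFun _ hX hsJ2 hZ hXW hXZ hWZ hX0 hZ0,
      integral_norm_dotProduct_sq_of_white hs2 hscov,
      integral_norm_dotProduct_sq_of_white hn2 hncov, vecNormSq_star, hsJvar]
    ring
  · rw [integral_add_mul_add_mul_conj_of_indepFun _ hX hsJ2 hZ hXW hWZ hX0 hZ0, hsJvar]

lemma uplink_mse (β : ℂ) (a b : ι → ℂ) :
    ∫ ω, vecNormSq ((β * (star a ⬝ᵥ (H *ᵥ s ω + sJ ω • hJ + n ω))) • b - sJ ω • hJ) ∂μ =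
      EJ * vecNormSq hJ +
        mseExcess EJ hJ (fun a => (star a ⬝ᵥ uplinkCovariance Es EJ N0 H hJ *ᵥ a).re) β a b := by
  have hu : MemLp (fun ω => star a ⬝ᵥ (H *ᵥ s ω + sJ ω • hJ + n ω)) 2 μ := by
    simp_rw [star_dotProduct_received]
    exact ((memLp_dotProduct hs2 _).add (hsJ2.const_mul _)).add (memLp_dotProduct hn2 _)
  obtain ⟨hpow, hcross⟩ := uplink_received_moments H hJ hs_sJ hs_n hsJ_n hs2 hsJ2 hn2 hsmean
    hnmean hscov hsJvar hncov a
  rw [integral_vecNormSq_mul_smul_sub_smul hu hsJ2, hpow, hcross, hsJvar, mseExcess,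
    re_star_dotProduct_uplinkCovariance_mulVec]
  ring_nf

end UplinkModel

theorem stmt4_general
    {Ω : Type*} [MeasurableSpace Ω] (μ : Measure Ω) [IsProbabilityMeasure μ]
    (B U : ℕ)
    (H : Matrix (Fin B) (Fin U) ℂ) (hJ : Fin B → ℂ)
    (Es EJ N0 : ℝ) (hEs : 0 < Es) (hEJ : 0 < EJ) (hN0 : 0 < N0)
    (s : Ω → Fin U → ℂ) (sJ : Ω → ℂ) (n : Ω → Fin B → ℂ)
    (hindep : iIndep
      ![MeasurableSpace.comap s inferInstance,
        MeasurableSpace.comap sJ inferInstance,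
        MeasurableSpace.comap n inferInstance] μ)
    (hs2 : MemLp s 2 μ) (hsJ2 : MemLp sJ 2 μ) (hn2 : MemLp n 2 μ)
    (hsmean : ∀ i, ∫ ω, s ω i ∂μ = 0)
    (hnmean : ∀ i, ∫ ω, n ω i ∂μ = 0)
    (hscov : ∀ i j, ∫ ω, s ω i * (starRingEnd ℂ) (s ω j) ∂μ = if i = j then (Es : ℂ) else 0)
    (hsJvar : ∫ ω, ‖sJ ω‖ ^ 2 ∂μ = EJ)
    (hncov : ∀ i j, ∫ ω, n ω i * (starRingEnd ℂ) (n ω j) ∂μ = if i = j then (N0 : ℂ) else 0)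
    (y : Ω → Fin B → ℂ) (hy : ∀ ω, y ω = H *ᵥ s ω + sJ ω • hJ + n ω)
    (Cy : Matrix (Fin B) (Fin B) ℂ)
    (hCy : Cy = (Es : ℂ) • (H * Hᴴ) + (EJ : ℂ) • vecMulVec hJ (star hJ)
      + (N0 : ℂ) • (1 : Matrix (Fin B) (Fin B) ℂ))
    (bhat ahat : Fin B → ℂ) (hbhat0 : bhat ≠ 0) (hahat0 : ahat ≠ 0)
    (hbmax : ∀ b : Fin B → ℂ, b ≠ 0 →
      ‖star hJ ⬝ᵥ b‖ ^ 2 / vecNormSq b ≤ ‖star hJ ⬝ᵥ bhat‖ ^ 2 / vecNormSq bhat)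
    (hamax : ∀ a : Fin B → ℂ, a ≠ 0 →
      ‖star hJ ⬝ᵥ a‖ ^ 2 / (star a ⬝ᵥ Cy *ᵥ a).re
        ≤ ‖star hJ ⬝ᵥ ahat‖ ^ 2 / (star ahat ⬝ᵥ Cy *ᵥ ahat).re)
    (βhat : ℂ)
    (hβhat : βhat = (EJ : ℂ) * (star hJ ⬝ᵥ ahat) * (star bhat ⬝ᵥ hJ)
        / ((vecNormSq bhat : ℂ) * (star ahat ⬝ᵥ Cy *ᵥ ahat))) :
    ∀ (β : ℂ) (a b : Fin B → ℂ),
      ∫ ω, vecNormSq ((βhat * (star ahat ⬝ᵥ y ω)) • bhat - sJ ω • hJ) ∂μ ≤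
      ∫ ω, vecNormSq ((β * (star a ⬝ᵥ y ω)) • b - sJ ω • hJ) ∂μ := by
  replace hCy : Cy = uplinkCovariance Es EJ N0 H hJ := hCy
  subst hCy
  have hmse : ∀ β a b, ∫ ω, vecNormSq ((β * (star a ⬝ᵥ y ω)) • b - sJ ω • hJ) ∂μ =
      EJ * vecNormSq hJ + mseExcess EJ hJ
        (fun a => (star a ⬝ᵥ uplinkCovariance Es EJ N0 H hJ *ᵥ a).re) β a b := by
    simp_rw [hy]
    exact uplink_mse H hJ (hindep.indep (i := 0) (j := 1) (by decide))
      (hindep.indep (i := 0) (j := 2) (by decide)) (hindep.indep (i := 1) (j := 2) (by decide))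
      hs2 hsJ2 hn2 hsmean hnmean hscov hsJvar hncov
  have hβhat' : βhat = conj ((EJ : ℂ) * (star hJ ⬝ᵥ bhat) * (star ahat ⬝ᵥ hJ)) /
      (vecNormSq bhat * (star ahat ⬝ᵥ uplinkCovariance Es EJ N0 H hJ *ᵥ ahat).re : ℝ) := by
    rw [hβhat, Complex.ofReal_mul, star_dotProduct_uplinkCovariance_mulVec, Complex.ofReal_re,
      map_mul, map_mul, Complex.conj_ofReal, starRingEnd_apply, starRingEnd_apply,
      ← star_dotProduct, ← star_dotProduct]
    ring
  intro β a b
  rw [hmse, hmse, hβhat']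
  gcongr
  exact mseExcess_conj_div_le hEJ
    (mul_norm_sq_le_re_star_dotProduct_uplinkCovariance_mulVec H hJ hEs.le hN0.le) hbhat0
    (re_star_dotProduct_uplinkCovariance_mulVec_pos H hJ hEs.le hEJ.le hN0 hahat0)
    hbmax hamax β a b

/-- Proposition 1: if `b̂` maximizes `|h_Jᴴ b|²/‖b‖²`, `â` maximizes
`|h_Jᴴ a|²/(aᴴ C_y a)`, and `β̂` is given by the closed-form scaling, then `(β̂, b̂, â)`
minimizes the mean squared error `E[‖β b (aᴴ y) − h_J s_J‖²]`. -/
theorem stmt4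
    {Ω : Type*} [MeasurableSpace Ω] (μ : Measure Ω) [IsProbabilityMeasure μ]
    (B U : ℕ) (hB : 0 < B) (hU : 0 < U)
    (H : Matrix (Fin B) (Fin U) ℂ) (hJ : Fin B → ℂ)
    (Es EJ N0 : ℝ) (hEs : 0 < Es) (hEJ : 0 < EJ) (hN0 : 0 < N0)
    (s : Ω → Fin U → ℂ) (sJ : Ω → ℂ) (n : Ω → Fin B → ℂ)
    (hindep : iIndep
      ![MeasurableSpace.comap s inferInstance,
        MeasurableSpace.comap sJ inferInstance,
        MeasurableSpace.comap n inferInstance] μ)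
    (hs2 : MemLp s 2 μ) (hsJ2 : MemLp sJ 2 μ) (hn2 : MemLp n 2 μ)
    (hsmean : ∀ i, ∫ ω, s ω i ∂μ = 0) (hsJmean : ∫ ω, sJ ω ∂μ = 0)
    (hnmean : ∀ i, ∫ ω, n ω i ∂μ = 0)
    (hscov : ∀ i j, ∫ ω, s ω i * (starRingEnd ℂ) (s ω j) ∂μ = if i = j then (Es : ℂ) else 0)
    (hsJvar : ∫ ω, ‖sJ ω‖ ^ 2 ∂μ = EJ)
    (hncov : ∀ i j, ∫ ω, n ω i * (starRingEnd ℂ) (n ω j) ∂μ = if i = j then (N0 : ℂ) else 0)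
    (y : Ω → Fin B → ℂ) (hy : ∀ ω, y ω = H *ᵥ s ω + sJ ω • hJ + n ω)
    (Cy : Matrix (Fin B) (Fin B) ℂ)
    (hCy : Cy = (Es : ℂ) • (H * Hᴴ) + (EJ : ℂ) • vecMulVec hJ (star hJ)
      + (N0 : ℂ) • (1 : Matrix (Fin B) (Fin B) ℂ))
    (hhJ : hJ ≠ 0)
    (bhat ahat : Fin B → ℂ) (hbhat0 : bhat ≠ 0) (hahat0 : ahat ≠ 0)
    (hbmax : ∀ b : Fin B → ℂ, b ≠ 0 →
      ‖star hJ ⬝ᵥ b‖ ^ 2 / vecNormSq b ≤ ‖star hJ ⬝ᵥ bhat‖ ^ 2 / vecNormSq bhat)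
    (hamax : ∀ a : Fin B → ℂ, a ≠ 0 →
      ‖star hJ ⬝ᵥ a‖ ^ 2 / (star a ⬝ᵥ Cy *ᵥ a).re
        ≤ ‖star hJ ⬝ᵥ ahat‖ ^ 2 / (star ahat ⬝ᵥ Cy *ᵥ ahat).re)
    (βhat : ℂ)
    (hβhat : βhat = (EJ : ℂ) * (star hJ ⬝ᵥ ahat) * (star bhat ⬝ᵥ hJ)
        / ((vecNormSq bhat : ℂ) * (star ahat ⬝ᵥ Cy *ᵥ ahat))) :
    ∀ (β : ℂ) (a b : Fin B → ℂ),
      ∫ ω, vecNormSq ((βhat * (star ahat ⬝ᵥ y ω)) • bhat - sJ ω • hJ) ∂μ ≤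
      ∫ ω, vecNormSq ((β * (star a ⬝ᵥ y ω)) • b - sJ ω • hJ) ∂μ :=
  stmt4_general μ B U H hJ Es EJ N0 hEs hEJ hN0 s sJ n hindep hs2 hsJ2 hn2 hsmean hnmean hscov
    hsJvar hncov y hy Cy hCy bhat ahat hbhat0 hahat0 hbmax hamax βhat hβhat
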